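/- arXiv:1902.04372 — 2 statements merged into one kernel-verified Lean document; each statement's English description precedes it below -/
import Mathlib

section
/- Let q be an odd prime power and m ≥ 3 odd. If a nonzero element u ∈ F_{q^m} satisfies u^{q^{(m-1)/2}+1} = -1 and u^{q^{(m-3)/2}+1} = -1, then u has multiplicative order 4; consequently such u exists only if q ≡ 1 (mod 4), in which case the solutions are exactly the elements with u² = -1. -/
/-! Write `n = q ^ b`. Raising `u ^ (n + 1) = -1` to the odd power `q` and comparing with
`u ^ (q * n + 1) = -1` gives `u ^ q = u`, hence `u ^ n = u` and `u ^ 2 = u ^ (n + 1) = -1`.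
Conversely, if `v ^ 2 = -1` and `q ≡ 1 (mod 4)` then `v ^ q = v`, so `v ^ (q ^ k + 1) = v ^ 2`.
That `-1` is a square in a field of order `q ^ m` with `m` odd forces `q ≡ 1 (mod 4)`. -/

theorem Nat.pow_mod_four_of_odd {q m : ℕ} (hq : Odd q) (hm : Odd m) : q ^ m % 4 = q % 4 := by
  obtain ⟨k, rfl⟩ := hm
  have hsq : q ^ 2 % 4 = 1 := by
    obtain ⟨t, rfl⟩ := hq
    ring_nf
    omega
  rw [pow_succ, pow_mul, Nat.mul_mod, Nat.pow_mod, hsq, one_pow]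
  simp

theorem pow_pow_eq_self_of_pow_eq_self {M : Type*} [Monoid M] {u : M} {q : ℕ} (h : u ^ q = u)
    (k : ℕ) : u ^ q ^ k = u := by
  induction k with
  | zero => simp
  | succ k ih => rw [pow_succ, pow_mul, ih, h]

section CommRing

variable {R : Type*} [CommRing R] [IsDomain R] {q : ℕ}

theorem pow_eq_self_of_pow_pow_add_one_eq_neg_one {u : R} {b : ℕ} (hq : Odd q)
    (hu : u ≠ 0) (h : u ^ (q ^ b + 1) = -1) (h' : u ^ (q ^ (b + 1) + 1) = -1) : u ^ q = u := by
  have hpow : u ^ q ^ (b + 1) * u ^ q = u ^ q ^ (b + 1) * u := by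
    calc u ^ q ^ (b + 1) * u ^ q = (u ^ (q ^ b + 1)) ^ q := by ring
      _ = -1 := by rw [h, hq.neg_one_pow]
      _ = u ^ q ^ (b + 1) * u := by rw [← h', pow_succ]
  exact mul_left_cancel₀ (pow_ne_zero _ hu) hpow

theorem sq_eq_neg_one_of_pow_pow_add_one_eq_neg_one {u : R} {b : ℕ} (hq : Odd q)
    (hu : u ≠ 0) (h : u ^ (q ^ b + 1) = -1) (h' : u ^ (q ^ (b + 1) + 1) = -1) : u ^ 2 = -1 := by
  have hself := pow_pow_eq_self_of_pow_eq_self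
    (pow_eq_self_of_pow_pow_add_one_eq_neg_one hq hu h h') b
  rwa [pow_succ, hself, ← sq] at h

end CommRing

section DistribNeg

variable {M : Type*} [Monoid M] [HasDistribNeg M]

theorem pow_eq_self_of_sq_eq_neg_one {q : ℕ} {v : M} (hq : q % 4 = 1) (hv : v ^ 2 = -1) :
    v ^ q = v := by
  rw [← Nat.div_add_mod q 4, hq, pow_succ, pow_mul, show 4 = 2 * 2 from rfl, pow_mul, hv]
  simp

theorem pow_pow_add_one_eq_neg_one_of_sq_eq_neg_one {q : ℕ} {v : M} (hq : q % 4 = 1)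
    (hv : v ^ 2 = -1) (k : ℕ) : v ^ (q ^ k + 1) = -1 := by
  rw [pow_succ, pow_pow_eq_self_of_pow_eq_self (pow_eq_self_of_sq_eq_neg_one hq hv), ← sq, hv]

theorem orderOf_eq_four_of_sq_eq_neg_one (hM : (-1 : M) ≠ 1) {u : M} (hu : u ^ 2 = -1) :
    orderOf u = 4 :=
  have : Fact (Nat.Prime 2) := ⟨Nat.prime_two⟩
  orderOf_eq_prime_pow (p := 2) (n := 1) (by rwa [pow_one, hu])
    (by rw [pow_succ, pow_mul, pow_one, hu]; simp)

end DistribNeg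

theorem FiniteField.mod_four_eq_one_of_sq_eq_neg_one {F : Type*} [Field F] [Fintype F] {q m : ℕ}
    (hq : Odd q) (hm : Odd m) (hF : Fintype.card F = q ^ m) {u : F} (hu : u ^ 2 = -1) :
    q % 4 = 1 := by
  have hsq : IsSquare (-1 : F) := ⟨u, by rw [← hu, sq]⟩
  rw [FiniteField.isSquare_neg_one_iff, hF, Nat.pow_mod_four_of_odd hq hm] at hsq
  obtain ⟨t, rfl⟩ := hq
  omega

theorem stmt_13_general (q m : ℕ)
    (hqodd : Odd q) (hm : 3 ≤ m) (hmodd : Odd m)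
    (F : Type*) [Field F] [Fintype F] (hF : Fintype.card F = q ^ m)
    (u : F) (hu : u ≠ 0)
    (h1 : u ^ (q ^ ((m - 1) / 2) + 1) = -1)
    (h2 : u ^ (q ^ ((m - 3) / 2) + 1) = -1) :
    orderOf u = 4 ∧ q % 4 = 1 ∧ u ^ 2 = -1 ∧
    ∀ v : F, v ^ 2 = -1 →
      v ^ (q ^ ((m - 1) / 2) + 1) = -1 ∧ v ^ (q ^ ((m - 3) / 2) + 1) = -1 := by
  rw [show (m - 1) / 2 = (m - 3) / 2 + 1 by omega] at h1
  have hu2 : u ^ 2 = -1 := sq_eq_neg_one_of_pow_pow_add_one_eq_neg_one hqodd hu h2 h1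
  have hchar : ringChar F ≠ 2 := by
    rw [Ne, FiniteField.even_card_iff_char_two, hF, ← Nat.even_iff, Nat.not_even_iff_odd]
    exact hqodd.pow
  have hq4 : q % 4 = 1 := FiniteField.mod_four_eq_one_of_sq_eq_neg_one hqodd hmodd hF hu2
  refine ⟨orderOf_eq_four_of_sq_eq_neg_one (Ring.neg_one_ne_one_of_char_ne_two hchar) hu2, hq4,
    hu2, fun v hv ↦ ⟨?_, ?_⟩⟩ <;>
  exact pow_pow_add_one_eq_neg_one_of_sq_eq_neg_one hq4 hv _

/-- If a nonzero u ∈ F_{q^m} satisfies u^{q^{(m-1)/2}+1} = -1 and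
u^{q^{(m-3)/2}+1} = -1, then u has multiplicative order 4, q ≡ 1 (mod 4),
u² = -1, and conversely every v with v² = -1 satisfies both equations. -/
theorem stmt_13 (q m : ℕ) (hq : ∃ p k : ℕ, p.Prime ∧ 0 < k ∧ q = p ^ k)
    (hqodd : Odd q) (hm : 3 ≤ m) (hmodd : Odd m)
    (F : Type*) [Field F] [Fintype F] (hF : Fintype.card F = q ^ m)
    (u : F) (hu : u ≠ 0)
    (h1 : u ^ (q ^ ((m - 1) / 2) + 1) = -1)
    (h2 : u ^ (q ^ ((m - 3) / 2) + 1) = -1) :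
    orderOf u = 4 ∧ q % 4 = 1 ∧ u ^ 2 = -1 ∧
    ∀ v : F, v ^ 2 = -1 →
      v ^ (q ^ ((m - 1) / 2) + 1) = -1 ∧ v ^ (q ^ ((m - 3) / 2) + 1) = -1 :=
  stmt_13_general q m hqodd hm hmodd F hF u hu h1 h2
end

section
/- Let q > 3 be a prime power and m = a(q-1) + 1 with a ≥ 1, and n = (q^m-1)/(q-1). Then the largest q-cyclotomic coset leader modulo n is δ = (q^m - 1 - q^{m-1} - Σ_{ℓ=1}^{q-2} q^{aℓ})/(q-1), and its q-cyclotomic coset has size m. -/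
/-!
Multiplying by `q - 1` turns residues modulo `n` into multiples of `q - 1` modulo `q ^ m - 1`,
and there multiplication by `q` rotates the `m` base-`q` digits cyclically. The number
`(q - 1) δ` has the digit `q - 2` at the positions `a, 2a, …, (q - 1) a = m - 1` and `q - 1`
elsewhere, so for such numbers the coset-leader condition says that the set of positions of
the digit `q - 2` is maximal in colex order among its rotations. The set `{a ℓ}` is strictly
larger than all of its nontrivial rotations, which makes `δ` a leader with a coset of size `m`.
Conversely, a leader above `δ` can only have the digits `q - 1` and `q - 2`, and the positions of
its digits `q - 2` form a rotation-maximal set whose size is divisible by `q - 1`; comparing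
its smallest cyclic gap with `a` shows that this set lies above `{a ℓ}` in colex order.
-/

open Finset Colex

def rotate (m j : ℕ) (P : Finset ℕ) : Finset ℕ := P.image fun p => (p + j) % m

section Rotate

variable {m : ℕ} {P : Finset ℕ}

lemma rotate_subset_range (hm : 0 < m) (j : ℕ) : rotate m j P ⊆ range m := by
  intro x hx
  obtain ⟨p, -, rfl⟩ := mem_image.1 hx
  exact mem_range.2 (Nat.mod_lt _ hm)

lemma injOn_add_mod (hP : P ⊆ range m) (j : ℕ) : Set.InjOn (fun p => (p + j) % m) P := by
  intro x hx y hy hxy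
  have h := Nat.ModEq.add_right_cancel' j hxy
  rwa [Nat.ModEq, Nat.mod_eq_of_lt (mem_range.1 (hP hx)),
    Nat.mod_eq_of_lt (mem_range.1 (hP hy))] at h

lemma rotate_rotate (i j : ℕ) : rotate m i (rotate m j P) = rotate m (j + i) P := by
  simp only [rotate, image_image]
  refine image_congr fun p _ => ?_
  simp only [Function.comp_apply, Nat.mod_add_mod, add_assoc]

lemma rotate_eq_self (hP : P ⊆ range m) {j : ℕ} (hj : j % m = 0) : rotate m j P = P := by
  refine (image_congr fun p hp => ?_).trans image_id
  rw [id, Nat.add_mod, hj, add_zero, Nat.mod_mod, Nat.mod_eq_of_lt (mem_range.1 (hP hp))]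

lemma rotate_mod (j : ℕ) : rotate m (j % m) P = rotate m j P := by
  simp only [rotate, Nat.add_mod_mod]

lemma pow_modEq_pow_mod {q : ℕ} (hq : 0 < q) (e : ℕ) :
    q ^ e ≡ q ^ (e % m) [MOD q ^ m - 1] := by
  have h : q ^ m ≡ 1 [MOD q ^ m - 1] := Nat.modEq_sub (Nat.one_le_pow _ _ hq)
  calc q ^ e = (q ^ m) ^ (e / m) * q ^ (e % m) := by
        rw [← pow_mul, ← pow_add, Nat.div_add_mod]
    _ ≡ 1 ^ (e / m) * q ^ (e % m) [MOD q ^ m - 1] := (h.pow _).mul_right _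
    _ = q ^ (e % m) := by rw [one_pow, one_mul]

lemma geomSum_mul_pow_modEq (hP : P ⊆ range m) {q : ℕ} (hq : 0 < q) (j : ℕ) :
    (∑ p ∈ P, q ^ p) * q ^ j ≡ ∑ p ∈ rotate m j P, q ^ p [MOD q ^ m - 1] := by
  rw [rotate, sum_image (injOn_add_mod hP j), sum_mul]
  refine Nat.ModEq.sum fun p _ => ?_
  rw [← pow_add]
  exact pow_modEq_pow_mod hq (p + j)

/-- Multiplication by `q` modulo `q ^ m - 1` rotates the base-`q` digits cyclically; the left
side is the number with digit `q - 2` at the positions in `P` and `q - 1` elsewhere. -/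
lemma sub_geomSum_mul_pow_mod {q : ℕ} (hq : 2 ≤ q) (hP : P ⊆ range m) (hne : P.Nonempty)
    (j : ℕ) :
    (q ^ m - 1 - ∑ p ∈ P, q ^ p) * q ^ j % (q ^ m - 1) =
      q ^ m - 1 - ∑ p ∈ rotate m j P, q ^ p := by
  have hm : 0 < m := Nat.pos_of_ne_zero (nonempty_range_iff.1 (hne.mono hP))
  set T := q ^ m - 1
  set R := ∑ p ∈ rotate m j P, q ^ p
  have hPT := Nat.geomSum_lt hq fun p hp => mem_range.1 (hP hp)
  have hRT := Nat.geomSum_lt hq (s := rotate m j P) fun p hp =>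
    mem_range.1 (rotate_subset_range hm j hp)
  have hR : 0 < R := sum_pos (fun p _ => by positivity) (hne.image _)
  rw [← Nat.mod_eq_of_lt (show T - R < T by omega)]
  refine Nat.ModEq.add_right_cancel' ((∑ p ∈ P, q ^ p) * q ^ j) ?_
  rw [← add_mul, Nat.sub_add_cancel (by omega)]
  calc T * q ^ j ≡ 0 [MOD T] := Nat.modEq_zero_iff_dvd.2 (dvd_mul_right _ _)
    _ ≡ T - R + R [MOD T] := by
      rw [Nat.sub_add_cancel (by omega)]; exact (Nat.modEq_zero_iff_dvd.2 dvd_rfl).symm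
    _ ≡ _ [MOD T] := (geomSum_mul_pow_modEq hP (by omega) j).symm.add_left _

end Rotate

lemma geomSum_modEq_card {q : ℕ} (hq : 0 < q) (P : Finset ℕ) :
    ∑ p ∈ P, q ^ p ≡ #P [MOD q - 1] := by
  rw [card_eq_sum_ones]
  refine Nat.ModEq.sum fun p _ => ?_
  simpa using (Nat.modEq_sub hq).pow p


section Digits

variable {q m S : ℕ}

lemma sum_digit_mul_pow (q x M : ℕ) : ∑ p ∈ range M, x / q ^ p % q * q ^ p = x % q ^ M := by
  induction M with
  | zero => simp [Nat.mod_one]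
  | succ M ih => rw [sum_range_succ, ih, Nat.mod_pow_succ, mul_comm]

lemma mul_pow_mod_lt_of_digit_lt (hq : 0 < q) (hS : S < q ^ m) {p c : ℕ} (hp : p < m)
    (hc : S / q ^ p % q < c) : S * q ^ (m - 1 - p) % (q ^ m - 1) < c * q ^ (m - 1) := by
  set X := q ^ (m - 1 - p)
  set H := S / q ^ (p + 1)
  set L := S % q ^ (p + 1)
  have hqm : q ^ (p + 1) * X = q ^ m := by rw [← pow_add]; congr 1; omega
  have hH : H < X := by
    rw [Nat.div_lt_iff_lt_mul (by positivity), mul_comm, hqm]; exact hS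
  have hL : L + 1 ≤ c * q ^ p := by
    have h1 : S % q ^ p < q ^ p := Nat.mod_lt _ (by positivity)
    have h2 : q ^ p * (S / q ^ p % q) + q ^ p ≤ q ^ p * c := by
      rw [← mul_add_one]; exact Nat.mul_le_mul_left _ hc
    have hLdef : L = S % q ^ p + q ^ p * (S / q ^ p % q) := Nat.mod_pow_succ
    linarith
  -- the digits above position `p` wrap around to the bottom
  have hcong : S * X ≡ H + L * X [MOD q ^ m - 1] := by
    have hS : S * X = H * q ^ m + L * X := by
      rw [← hqm, ← Nat.div_add_mod S (q ^ (p + 1))]; ring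
    rw [hS]
    simpa using ((Nat.modEq_sub (Nat.one_le_pow _ _ hq)).mul_left H).add_right (L * X)
  calc S * X % (q ^ m - 1) = (H + L * X) % (q ^ m - 1) := hcong
    _ ≤ H + L * X := Nat.mod_le _ _
    _ < (L + 1) * X := by rw [add_one_mul, add_comm]; omega
    _ ≤ c * q ^ p * X := Nat.mul_le_mul_right _ hL
    _ = c * q ^ (m - 1) := by rw [mul_assoc, ← pow_add]; congr 2; omega

lemma pow_sub_one_sub_eq_geomSum (hq : 2 ≤ q) (hS : S < q ^ m)
    (hdig : ∀ p < m, q - 2 ≤ S / q ^ p % q) :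
    q ^ m - 1 - S = ∑ p ∈ (range m).filter (fun p => S / q ^ p % q = q - 2), q ^ p := by
  have hT : ∑ p ∈ range m, (q - 1) * q ^ p + 1 = q ^ m := by
    have h := geom_sum_mul_add (q - 1) m
    rwa [Nat.sub_add_cancel (by omega), mul_comm, mul_sum] at h
  have hdigits : ∑ p ∈ range m, S / q ^ p % q * q ^ p = S := by
    rw [sum_digit_mul_pow, Nat.mod_eq_of_lt hS]
  have hsplit : ∀ p ∈ range m,
      (if S / q ^ p % q = q - 2 then q ^ p else 0) + S / q ^ p % q * q ^ p = (q - 1) * q ^ p := by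
    intro p hp
    have hlo := hdig p (mem_range.1 hp)
    have hhi := Nat.mod_lt (S / q ^ p) (by omega : 0 < q)
    split_ifs with h
    · rw [h, ← one_add_mul]; congr 1; omega
    · rw [show S / q ^ p % q = q - 1 by omega, zero_add]
  have hsum := sum_congr rfl hsplit
  rw [sum_add_distrib, hdigits] at hsum
  rw [sum_filter]
  omega

end Digits

def IsRotationMax (m : ℕ) (P : Finset ℕ) : Prop := ∀ j, toColex (rotate m j P) ≤ toColex P

/-- The distance from `u` up to `v` on the cycle `ℤ / m`. -/
def cycDist (m u v : ℕ) : ℕ := (v + m - u) % m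

section CycDist

variable {m x y : ℕ}

lemma cycDist_of_le (hxy : x ≤ y) (hy : y < m) : cycDist m x y = y - x := by
  rw [cycDist, show y + m - x = y - x + m by omega, Nat.add_mod_right, Nat.mod_eq_of_lt (by omega)]

lemma cycDist_of_lt (hyx : y < x) (hx : x < m) : cycDist m x y = y + m - x :=
  Nat.mod_eq_of_lt (by omega)

lemma cycDist_pos (hx : x < m) (hy : y < m) (hxy : x ≠ y) : 0 < cycDist m x y := by
  rcases lt_or_gt_of_ne hxy with h | h
  · rw [cycDist_of_le h.le hy]; omega
  · rw [cycDist_of_lt h hx]; omega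

lemma add_sub_one_sub_mod (hx : x < m) (hy : y < m) :
    (x + (m - 1 - y)) % m = m - 1 - cycDist m x y := by
  rcases le_or_gt x y with h | h
  · rw [cycDist_of_le h hy, Nat.mod_eq_of_lt (by omega)]
    omega
  · rw [cycDist_of_lt h hx, show x + (m - 1 - y) = x - y - 1 + m by omega, Nat.add_mod_right,
      Nat.mod_eq_of_lt (by omega)]
    omega

end CycDist

/-- In a rotation-maximal set the top position `m - 1` is occupied, and so is the position
one minimal gap below it: otherwise rotating a closest pair to the top would increase the set. -/
lemma IsRotationMax.mem_top_and_gap {m : ℕ} {P : Finset ℕ} (hmax : IsRotationMax m P)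
    (hP : P ⊆ range m) {u v : ℕ} (hu : u ∈ P) (hv : v ∈ P)
    (hmin : ∀ x ∈ P, ∀ y ∈ P, x ≠ y → cycDist m u v ≤ cycDist m x y) :
    m - 1 ∈ P ∧ m - 1 - cycDist m u v ∈ P := by
  have hlt : ∀ x ∈ P, x < m := fun x hx => mem_range.1 (hP hx)
  have hR := toColex_le_toColex.1 (hmax (m - 1 - v))
  have hrot : ∀ x ∈ P, m - 1 - cycDist m x v ∈ rotate m (m - 1 - v) P := fun x hx =>
    mem_image.2 ⟨x, hx, add_sub_one_sub_mod (hlt x hx) (hlt v hv)⟩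
  have hvv : cycDist m v v = 0 := by simp [cycDist]
  have htopR : m - 1 ∈ rotate m (m - 1 - v) P := by simpa [hvv] using hrot v hv
  have htop : m - 1 ∈ P := by
    by_contra h
    obtain ⟨b, hb, hbR, hle⟩ := hR htopR h
    exact hbR (by rwa [show b = m - 1 by have := hlt b hb; omega])
  refine ⟨htop, ?_⟩
  by_contra h
  obtain ⟨b, hb, hbR, hle⟩ := hR (hrot u hu) h
  have hbtop : b ≠ m - 1 := fun hb' => hbR (hb' ▸ htopR)
  have hbgap : b ≠ m - 1 - cycDist m u v := fun hb' => hbR (hb' ▸ hrot u hu)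
  have hbm := hlt b hb
  have hd : cycDist m b (m - 1) = m - 1 - b := cycDist_of_le (by omega) (by omega)
  have := hmin b hb (m - 1) htop hbtop
  omega

section Separated

variable {g lo : ℕ}

lemma mul_card_le_of_separated (X : Finset ℕ)
    (hsep : ∀ x ∈ X, ∀ y ∈ X, x < y → x + g ≤ y) :
    ∀ hi, (∀ x ∈ X, lo ≤ x ∧ x + g ≤ hi) → g * #X ≤ hi - lo := by
  induction X using Finset.induction_on_max with
  | empty => simp
  | insert M X hM ih =>
    intro hi hX
    have hMX : M ∉ X := fun h => lt_irrefl M (hM M h)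
    have hXM := ih (fun x hx y hy => hsep x (mem_insert_of_mem hx) y (mem_insert_of_mem hy)) M
      fun x hx => ⟨(hX x (mem_insert_of_mem hx)).1,
        hsep x (mem_insert_of_mem hx) M (mem_insert_self M X) (hM x hx)⟩
    have := hX M (mem_insert_self M X)
    rw [card_insert_of_notMem hMX, mul_add_one]
    omega

lemma eq_image_of_separated (X : Finset ℕ)
    (hsep : ∀ x ∈ X, ∀ y ∈ X, x < y → x + g ≤ y)
    (hX : ∀ x ∈ X, lo ≤ x ∧ x + g ≤ lo + g * #X) :
    X = (range #X).image fun i => lo + g * i := by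
  induction X using Finset.induction_on_max with
  | empty => simp
  | insert M X hM ih =>
    have hMX : M ∉ X := fun h => lt_irrefl M (hM M h)
    have hsepX : ∀ x ∈ X, ∀ y ∈ X, x < y → x + g ≤ y :=
      fun x hx y hy => hsep x (mem_insert_of_mem hx) y (mem_insert_of_mem hy)
    have hbelow : ∀ x ∈ X, lo ≤ x ∧ x + g ≤ M := fun x hx =>
      ⟨(hX x (mem_insert_of_mem hx)).1,
        hsep x (mem_insert_of_mem hx) M (mem_insert_self M X) (hM x hx)⟩
    have hcard := mul_card_le_of_separated X hsepX M hbelow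
    have hMb := hX M (mem_insert_self M X)
    rw [card_insert_of_notMem hMX, mul_add_one] at hMb
    have hMeq : M = lo + g * #X := by omega
    rw [card_insert_of_notMem hMX, range_add_one, image_insert, ← hMeq,
      ← ih hsepX fun x hx => ⟨(hbelow x hx).1, hMeq ▸ (hbelow x hx).2⟩]

end Separated

section Multiples

variable {a t : ℕ}

def multiples (a t : ℕ) : Finset ℕ := (Icc 1 t).image (a * ·)

def shiftedMultiples (a t k : ℕ) : Finset ℕ :=
  (range k).image (fun i => a - 1 + a * i) ∪ (Ioc k t).image (a * ·)

lemma multiples_subset_range : multiples a t ⊆ range (a * t + 1) := by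
  intro x hx
  obtain ⟨ℓ, hℓ, rfl⟩ := mem_image.1 hx
  have := Nat.mul_le_mul_left a (mem_Icc.1 hℓ).2
  exact mem_range.2 (by omega)

lemma rotate_multiples (ha : 1 ≤ a) {k : ℕ} (hk : k ≤ t) :
    rotate (a * t + 1) (a * k) (multiples a t) = shiftedMultiples a t k := by
  have hfit : ∀ ℓ ≤ t, a * ℓ % (a * t + 1) = a * ℓ := fun ℓ hℓ =>
    Nat.mod_eq_of_lt (Nat.lt_succ_of_le (Nat.mul_le_mul_left a hℓ))
  have hwrap : ∀ i < k, a * (t + 1 + i) % (a * t + 1) = a - 1 + a * i := fun i hi => by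
    have := Nat.mul_le_mul_left a (show i + 1 ≤ t by omega)
    rw [mul_add_one] at this
    rw [show a * (t + 1 + i) = a - 1 + a * i + (a * t + 1) by
        rw [mul_add, mul_add, mul_one]; omega,
      Nat.add_mod_right, Nat.mod_eq_of_lt (by omega)]
  ext x
  simp only [rotate, multiples, shiftedMultiples, mem_image, mem_Icc, mem_union, mem_range,
    mem_Ioc, exists_exists_and_eq_and]
  constructor
  · rintro ⟨ℓ, ⟨hℓ1, hℓt⟩, rfl⟩
    rw [← mul_add]
    rcases le_or_gt (ℓ + k) t with h | h
    · exact Or.inr ⟨ℓ + k, ⟨by omega, h⟩, (hfit _ h).symm⟩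
    · refine Or.inl ⟨ℓ + k - (t + 1), by omega, ?_⟩
      rw [← hwrap _ (by omega), show t + 1 + (ℓ + k - (t + 1)) = ℓ + k by omega]
  · rintro (⟨i, hi, rfl⟩ | ⟨ℓ, ⟨hkℓ, hℓt⟩, rfl⟩)
    · refine ⟨t + 1 + i - k, ⟨by omega, by omega⟩, ?_⟩
      rw [← mul_add, show t + 1 + i - k + k = t + 1 + i by omega, hwrap i hi]
    · refine ⟨ℓ - k, ⟨by omega, by omega⟩, ?_⟩
      rw [← mul_add, Nat.sub_add_cancel hkℓ.le, hfit ℓ hℓt]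

lemma toColex_shiftedMultiples_lt (ha : 1 ≤ a) {k : ℕ} (hk : 1 ≤ k) (hkt : k < t) :
    toColex (shiftedMultiples a t k) < toColex (multiples a t) := by
  have hlow : ∀ i < k, a - 1 + a * i < a * k := fun i hi => by
    have := Nat.mul_le_mul_left a (show i + 1 ≤ k by omega)
    rw [mul_add_one] at this
    omega
  refine toColex_lt_toColex_iff_exists_forall_lt.2
    ⟨a * k, mem_image.2 ⟨k, mem_Icc.2 ⟨hk, hkt.le⟩, rfl⟩, ?_, ?_⟩
  · simp only [shiftedMultiples, mem_union, mem_image, mem_range, mem_Ioc, not_or, not_exists,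
      not_and]
    refine ⟨fun i hi h => (hlow i hi).ne h, fun ℓ hℓ h => ?_⟩
    exact (Nat.mul_lt_mul_left (by omega)).2 hℓ.1 |>.ne' h
  · intro b hb hbA
    rcases mem_union.1 hb with hb | hb
    · obtain ⟨i, hi, rfl⟩ := mem_image.1 hb
      exact hlow i (mem_range.1 hi)
    · obtain ⟨ℓ, hℓ, rfl⟩ := mem_image.1 hb
      exact absurd (mem_image.2 ⟨ℓ, mem_Icc.2 ⟨by have := (mem_Ioc.1 hℓ).1; omega,
        (mem_Ioc.1 hℓ).2⟩, rfl⟩) hbA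

/-- Every nontrivial rotation strictly decreases `multiples a t`: either it moves the top
element `a * t` away, or it is a rotation by a multiple of `a`. -/
lemma toColex_rotate_multiples_lt (ha : 1 ≤ a) {j : ℕ} (hj : 0 < j) (hjm : j < a * t + 1) :
    toColex (rotate (a * t + 1) j (multiples a t)) < toColex (multiples a t) := by
  by_cases hmul : ∃ k, 1 ≤ k ∧ k < t ∧ j = a * k
  · obtain ⟨k, hk, hkt, rfl⟩ := hmul
    rw [rotate_multiples ha hkt.le]
    exact toColex_shiftedMultiples_lt ha hk hkt
  push Not at hmul
  have hlt : ∀ x ∈ rotate (a * t + 1) j (multiples a t), x < a * t := by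
    intro x hx
    simp only [rotate, multiples, mem_image, mem_Icc, exists_exists_and_eq_and] at hx
    obtain ⟨ℓ, ⟨hℓ1, hℓt⟩, rfl⟩ := hx
    have hle := Nat.mul_le_mul_left a hℓt
    have hsplit : a * ℓ + a * (t - ℓ) = a * t := by rw [← mul_add, Nat.add_sub_cancel' hℓt]
    have hne : j ≠ a * (t - ℓ) := fun h => by
      rcases Nat.eq_zero_or_pos (t - ℓ) with h0 | h0
      · rw [h0, mul_zero] at h; omega
      · exact hmul (t - ℓ) h0 (by omega) h
    have hmod : (a * ℓ + j) % (a * t + 1) < a * t + 1 := Nat.mod_lt _ (by omega)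
    rcases lt_or_ge (a * ℓ + j) (a * t + 1) with h | h
    · rw [Nat.mod_eq_of_lt h] at hmod ⊢; omega
    · rw [Nat.mod_eq_sub_mod h, Nat.mod_eq_of_lt (by omega)]; omega
  have ht : 0 < t := Nat.pos_of_ne_zero fun h => by simp [h] at hjm; omega
  refine toColex_lt_toColex_iff_exists_forall_lt.2
    ⟨a * t, mem_image.2 ⟨t, mem_Icc.2 ⟨ht, le_rfl⟩, rfl⟩, fun h => (hlt _ h).false,
      fun b hb _ => hlt b hb⟩

lemma isRotationMax_multiples (ha : 1 ≤ a) : IsRotationMax (a * t + 1) (multiples a t) := by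
  intro j
  rw [← rotate_mod]
  rcases Nat.eq_zero_or_pos (j % (a * t + 1)) with h | h
  · rw [rotate_eq_self multiples_subset_range (by rw [h, Nat.zero_mod])]
  · exact (toColex_rotate_multiples_lt ha h (Nat.mod_lt _ (by omega))).le

lemma card_multiples (ha : 0 < a) : #(multiples a t) = t := by
  rw [multiples, card_image_of_injective _ (mul_right_injective₀ ha.ne'), Nat.card_Icc,
    Nat.add_sub_cancel]

lemma multiples_nonempty (ha : 0 < a) (ht : 1 ≤ t) : (multiples a t).Nonempty :=
  card_pos.1 (by rw [card_multiples ha]; omega)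

lemma geomSum_multiples (ha : 0 < a) (ht : 1 ≤ t) (q : ℕ) :
    ∑ p ∈ multiples a t, q ^ p = q ^ (a * t) + ∑ ℓ ∈ Icc 1 (t - 1), q ^ (a * ℓ) := by
  obtain ⟨t, rfl⟩ : ∃ s, t = s + 1 := ⟨t - 1, by omega⟩
  rw [multiples, sum_image fun _ _ _ _ h => mul_left_cancel₀ ha.ne' h,
    sum_Icc_succ_top (by omega), add_comm, Nat.add_sub_cancel]

lemma sub_one_dvd_geomSum_multiples {q : ℕ} (hq : 0 < q) (ha : 0 < a) :
    q - 1 ∣ ∑ p ∈ multiples a (q - 1), q ^ p :=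
  Nat.modEq_zero_iff_dvd.1
    ((geomSum_modEq_card hq _).trans (by rw [card_multiples ha]; exact Nat.mod_self _))

lemma geomSum_multiples_lt {q : ℕ} (hq : 2 ≤ q) :
    ∑ p ∈ multiples a t, q ^ p < 2 * q ^ (a * t) := by
  have hsub : multiples a t ⊆ insert (a * t) (range (a * t)) := by
    intro x hx
    obtain ⟨ℓ, hℓ, rfl⟩ := mem_image.1 hx
    have := Nat.mul_le_mul_left a (mem_Icc.1 hℓ).2
    rw [mem_insert, mem_range]
    omega
  calc ∑ p ∈ multiples a t, q ^ p ≤ ∑ p ∈ insert (a * t) (range (a * t)), q ^ p :=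
        sum_le_sum_of_subset hsub
    _ = q ^ (a * t) + ∑ p ∈ range (a * t), q ^ p := sum_insert (by simp)
    _ < 2 * q ^ (a * t) := by
        have := Nat.geomSum_lt hq (s := range (a * t)) fun p hp => mem_range.1 hp
        omega

end Multiples

section RotationMax

variable {a t : ℕ} {P : Finset ℕ}

lemma toColex_multiples_lt_of_gap (ht : 0 < t) {g : ℕ} (hg : 0 < g) (hga : g < a)
    (htop : a * t ∈ P) (hgap : a * t - g ∈ P) : toColex (multiples a t) < toColex P := by
  have hbelow : ∀ x ∈ multiples a t, x ≠ a * t → x + a ≤ a * t := by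
    intro x hx hxt
    obtain ⟨ℓ, hℓ, rfl⟩ := mem_image.1 hx
    have hℓt : ℓ + 1 ≤ t := by
      rcases (mem_Icc.1 hℓ).2.lt_or_eq with h | rfl
      · exact h
      · exact absurd rfl hxt
    have := Nat.mul_le_mul_left a hℓt
    rwa [mul_add_one] at this
  have hat : a ≤ a * t := Nat.le_mul_of_pos_right a ht
  refine toColex_lt_toColex_iff_exists_forall_lt.2 ⟨a * t - g, hgap, fun h => ?_, ?_⟩
  · have := hbelow _ h (by omega)
    omega
  · intro x hx hxP
    have := hbelow x hx (fun h => hxP (h ▸ htop))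
    omega

lemma eq_shiftedMultiples_of_toColex_lt (ha : 0 < a)
    (hsep : ∀ x ∈ P, ∀ y ∈ P, x < y → x + a ≤ y) (hlo : ∀ x ∈ P, a - 1 ≤ x)
    (hcard : #P = t) (hlt : toColex P < toColex (multiples a t)) :
    ∃ k ≤ t, P = shiftedMultiples a t k := by
  obtain ⟨w, hw, hfilter⟩ := Colex.lt_iff_exists_filter_lt.1 hlt
  obtain ⟨hwA, hwP⟩ := mem_sdiff.1 hw
  obtain ⟨k, hk, rfl⟩ := mem_image.1 hwA
  obtain ⟨hk1, hkt⟩ := mem_Icc.1 hk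
  have hupper : {x ∈ P | a * k < x} = (Ioc k t).image (a * ·) := by
    rw [hfilter]
    ext x
    simp only [multiples, mem_filter, mem_image, mem_Icc, mem_Ioc]
    constructor
    · rintro ⟨⟨ℓ, ⟨-, hℓt⟩, rfl⟩, h⟩
      exact ⟨ℓ, ⟨(Nat.mul_lt_mul_left ha).1 h, hℓt⟩, rfl⟩
    · rintro ⟨ℓ, ⟨hkℓ, hℓt⟩, rfl⟩
      exact ⟨⟨ℓ, ⟨by omega, hℓt⟩, rfl⟩, (Nat.mul_lt_mul_left ha).2 hkℓ⟩
  have hsplit : P = {x ∈ P | x < a * k} ∪ {x ∈ P | a * k < x} := by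
    ext x
    simp only [mem_union, mem_filter]
    constructor
    · intro hx
      rcases lt_trichotomy x (a * k) with h | rfl | h
      · exact Or.inl ⟨hx, h⟩
      · exact absurd hx hwP
      · exact Or.inr ⟨hx, h⟩
    · rintro (⟨hx, -⟩ | ⟨hx, -⟩) <;> exact hx
  have hcardL : #{x ∈ P | x < a * k} = k := by
    have hU : #((Ioc k t).image (a * ·)) = t - k := by
      rw [card_image_of_injective _ (mul_right_injective₀ ha.ne'), Nat.card_Ioc]
    have := congrArg card hsplit
    rw [card_union_of_disjoint (disjoint_filter.2 fun x _ h h' => lt_asymm h h'), hupper, hU,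
      hcard] at this
    omega
  have hlower := eq_image_of_separated (lo := a - 1) {x ∈ P | x < a * k}
    (fun x hx y hy => hsep x (mem_filter.1 hx).1 y (mem_filter.1 hy).1)
    fun x hx => ⟨hlo x (mem_filter.1 hx).1, by
      rw [hcardL]; have := (mem_filter.1 hx).2; omega⟩
  rw [hcardL] at hlower
  exact ⟨k, hkt, by rw [hsplit, hlower, hupper, shiftedMultiples]⟩

lemma card_eq_of_separated_of_dvd (ha : 1 ≤ a) (ht : 2 ≤ t) (hne : P.Nonempty) (hdvd : t ∣ #P)
    (hsep : ∀ x ∈ P, ∀ y ∈ P, x < y → x + a ≤ y)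
    (hP : ∀ x ∈ P, a - 1 ≤ x ∧ x ≤ a * t) :
    #P = t := by
  have hbound := mul_card_le_of_separated (lo := a - 1) P hsep (a * t + a)
    fun x hx => ⟨(hP x hx).1, by have := (hP x hx).2; omega⟩
  obtain ⟨c, hc⟩ := hdvd
  rcases lt_or_ge c 2 with h | h
  · interval_cases c
    · exact absurd (hc ▸ card_pos.2 hne) (by simp)
    · simpa using hc
  · have : a * (t * 2) ≤ a * #P := Nat.mul_le_mul_left a (hc ▸ Nat.mul_le_mul_left t h)
    have : t ≤ a * t := Nat.le_mul_of_pos_left t ha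
    have : a * (t * 2) = a * t + a * t := by ring
    omega

/-- Let `g` be the least cyclic gap of `P`. If `g < a`, then `P` already beats `multiples a t`
at its second largest element. If `g ≥ a`, counting forces `#P = t`, and a set of `t` points
with gaps at least `a` lying below `multiples a t` is one of its rotations, which contradicts
maximality. -/
theorem toColex_multiples_le_of_isRotationMax (ha : 1 ≤ a) (ht : 2 ≤ t)
    (hP : P ⊆ range (a * t + 1)) (hne : P.Nonempty) (hmax : IsRotationMax (a * t + 1) P)
    (hdvd : t ∣ #P) :
    toColex (multiples a t) ≤ toColex P := by
  set m := a * t + 1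
  have hlt : ∀ x ∈ P, x < m := fun x hx => mem_range.1 (hP hx)
  have hPt : t ≤ #P := Nat.le_of_dvd (card_pos.2 hne) hdvd
  have hpair : P.offDiag.Nonempty := by
    obtain ⟨x, hx, y, hy, hxy⟩ := one_lt_card.1 (show 1 < #P by omega)
    exact ⟨(x, y), mem_offDiag.2 ⟨hx, hy, hxy⟩⟩
  obtain ⟨⟨u, v⟩, huv, hmin⟩ :=
    P.offDiag.exists_min_image (fun x => cycDist m x.1 x.2) hpair
  obtain ⟨hu, hv, huv⟩ := mem_offDiag.1 huv
  set g := cycDist m u v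
  obtain ⟨htop, hgap⟩ := hmax.mem_top_and_gap hP hu hv
    fun x hx y hy hxy => hmin (x, y) (mem_offDiag.2 ⟨hx, hy, hxy⟩)
  rw [show m - 1 = a * t by omega] at htop hgap
  have hg : 0 < g := cycDist_pos (hlt u hu) (hlt v hv) huv
  rcases lt_or_ge g a with hga | hag
  · exact (toColex_multiples_lt_of_gap (by omega) hg hga htop hgap).le
  have hsep : ∀ x ∈ P, ∀ y ∈ P, x < y → x + a ≤ y := fun x hx y hy hxy => by
    have := hmin (x, y) (mem_offDiag.2 ⟨hx, hy, hxy.ne⟩)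
    rw [cycDist_of_le hxy.le (hlt y hy)] at this
    omega
  have hlo : ∀ x ∈ P, a - 1 ≤ x := fun x hx => by
    rcases eq_or_ne x (a * t) with rfl | hxt
    · exact le_trans (Nat.sub_le a 1) (Nat.le_mul_of_pos_right a (by omega))
    · have := hmin (a * t, x) (mem_offDiag.2 ⟨htop, hx, hxt.symm⟩)
      have hxlt : x < a * t := by have := hlt x hx; omega
      rw [cycDist_of_lt hxlt (by omega)] at this
      omega
  have hcard : #P = t := card_eq_of_separated_of_dvd ha ht hne hdvd hsep
    fun x hx => ⟨hlo x hx, by have := hlt x hx; omega⟩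
  by_contra hPA
  rw [not_le] at hPA
  obtain ⟨k, hk, rfl⟩ := eq_shiftedMultiples_of_toColex_lt ha hsep hlo hcard hPA
  have hkm : a * k ≤ m := by have := Nat.mul_le_mul_left a hk; omega
  have hback : rotate m (m - a * k) (shiftedMultiples a t k) = multiples a t := by
    rw [← rotate_multiples ha hk, rotate_rotate,
      rotate_eq_self multiples_subset_range (by rw [Nat.add_sub_cancel' hkm, Nat.mod_self])]
  exact (hmax (m - a * k)).not_gt (hback ▸ hPA)

end RotationMax

def IsCosetLeader (q n s : ℕ) : Prop := ∀ j, s ≤ s * q ^ j % n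

lemma isCosetLeader_mul_iff {q n s c : ℕ} (hc : 0 < c) :
    IsCosetLeader q (c * n) (c * s) ↔ IsCosetLeader q n s := by
  refine forall_congr' fun j => ?_
  rw [mul_assoc, Nat.mul_mod_mul_left]
  exact Nat.mul_le_mul_left_iff hc

lemma isCosetLeader_sub_geomSum_iff {q m : ℕ} {P : Finset ℕ} (hq : 2 ≤ q) (hP : P ⊆ range m)
    (hne : P.Nonempty) :
    IsCosetLeader q (q ^ m - 1) (q ^ m - 1 - ∑ p ∈ P, q ^ p) ↔ IsRotationMax m P := by
  have hm : 0 < m := Nat.pos_of_ne_zero (nonempty_range_iff.1 (hne.mono hP))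
  refine forall_congr' fun j => ?_
  rw [sub_geomSum_mul_pow_mod hq hP hne, ← geomSum_le_geomSum_iff_toColex_le_toColex hq]
  have := Nat.geomSum_lt hq fun p hp => mem_range.1 (hP hp)
  have := Nat.geomSum_lt hq (s := rotate m j P) fun p hp =>
    mem_range.1 (rotate_subset_range hm j hp)
  omega

lemma le_digit_of_isCosetLeader {q m S : ℕ} (hq : 0 < q) (hS : S < q ^ m)
    (hlead : IsCosetLeader q (q ^ m - 1) S) (hSlow : (q - 2) * q ^ (m - 1) ≤ S) {p : ℕ}
    (hp : p < m) : q - 2 ≤ S / q ^ p % q := by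
  by_contra h
  have := mul_pow_mod_lt_of_digit_lt hq hS hp (not_le.1 h)
  have := hlead (m - 1 - p)
  omega

lemma isCosetLeader_sub_geomSum_multiples {q a t : ℕ} (hq : 2 ≤ q) (ha : 1 ≤ a)
    (ht : 1 ≤ t) :
    IsCosetLeader q (q ^ (a * t + 1) - 1) (q ^ (a * t + 1) - 1 - ∑ p ∈ multiples a t, q ^ p) :=
  (isCosetLeader_sub_geomSum_iff hq multiples_subset_range (multiples_nonempty ha ht)).2
    (isRotationMax_multiples ha)

lemma sub_geomSum_multiples_mul_pow_mod_ne {q a t l : ℕ} (hq : 2 ≤ q) (ha : 1 ≤ a)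
    (ht : 1 ≤ t) (hl : 0 < l) (hlm : l < a * t + 1) :
    (q ^ (a * t + 1) - 1 - ∑ p ∈ multiples a t, q ^ p) * q ^ l % (q ^ (a * t + 1) - 1) ≠
      q ^ (a * t + 1) - 1 - ∑ p ∈ multiples a t, q ^ p := by
  rw [sub_geomSum_mul_pow_mod hq multiples_subset_range (multiples_nonempty ha ht)]
  have := (geomSum_lt_geomSum_iff_toColex_lt_toColex hq).2 (toColex_rotate_multiples_lt ha hl hlm)
  have := Nat.geomSum_lt hq (s := multiples a t) fun p hp => mem_range.1 (multiples_subset_range hp)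
  omega

/-- Above the bound all digits of `S` are `q - 1` or `q - 2`, and the positions of the digits
`q - 2` form a rotation-maximal set whose size is divisible by `q - 1`. -/
theorem le_sub_geomSum_multiples_of_isCosetLeader {q a m S : ℕ} (hq : 3 ≤ q) (ha : 1 ≤ a)
    (hm : m = a * (q - 1) + 1) (hS : S < q ^ m - 1) (hdvd : q - 1 ∣ S)
    (hlead : IsCosetLeader q (q ^ m - 1) S) :
    S ≤ q ^ m - 1 - ∑ p ∈ multiples a (q - 1), q ^ p := by
  by_contra hgt
  rw [not_le] at hgt
  have hA := geomSum_multiples_lt (a := a) (t := q - 1) (by omega : 2 ≤ q)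
  rw [← show m - 1 = a * (q - 1) by omega] at hA
  have hqm : q ^ m = (q - 2) * q ^ (m - 1) + 2 * q ^ (m - 1) := by
    rw [← add_mul, show q - 2 + 2 = q by omega, ← pow_succ', Nat.sub_add_cancel (by omega)]
  set P := (range m).filter fun p => S / q ^ p % q = q - 2
  have hrepr : q ^ m - 1 - S = ∑ p ∈ P, q ^ p :=
    pow_sub_one_sub_eq_geomSum (by omega) (by omega) fun p hp =>
      le_digit_of_isCosetLeader (by omega) (by omega) hlead (by omega) hp
  have hne : P.Nonempty := by
    rw [nonempty_iff_ne_empty]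
    rintro hP
    rw [hP, sum_empty] at hrepr
    omega
  have hSP : S = q ^ m - 1 - ∑ p ∈ P, q ^ p := by omega
  have hmax : IsRotationMax m P :=
    (isCosetLeader_sub_geomSum_iff (by omega) (filter_subset _ _) hne).1 (hSP ▸ hlead)
  have hdvdP : q - 1 ∣ #P := by
    have hw : q - 1 ∣ ∑ p ∈ P, q ^ p :=
      hrepr ▸ Nat.dvd_sub (Nat.sub_one_dvd_pow_sub_one q m) hdvd
    exact Nat.modEq_zero_iff_dvd.1
      ((geomSum_modEq_card (by omega) P).symm.trans (Nat.modEq_zero_iff_dvd.2 hw))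
  have hPm : P ⊆ range (a * (q - 1) + 1) := hm ▸ filter_subset _ _
  have := toColex_multiples_le_of_isRotationMax ha (by omega) hPm hne (hm ▸ hmax) hdvdP
  rw [← geomSum_le_geomSum_iff_toColex_le_toColex (by omega : 2 ≤ q)] at this
  omega

theorem stmt_16_general (q a m n d : ℕ)
    (hq3 : 3 < q) (ha : 1 ≤ a) (hm : m = a * (q - 1) + 1)
    (hn : n = (q ^ m - 1) / (q - 1))
    (hd : d = (q ^ m - 1 - q ^ (m - 1) - ∑ ℓ ∈ Finset.Icc 1 (q - 2), q ^ (a * ℓ)) / (q - 1)) :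
    (∀ j : ℕ, d ≤ d * q ^ j % n) ∧
    (∀ s : ℕ, d < s → s < n → ¬ (∀ j : ℕ, s ≤ s * q ^ j % n)) ∧
    IsLeast {l : ℕ | 0 < l ∧ d * q ^ l ≡ d [MOD n]} m := by
  have hTn : (q - 1) * n = q ^ m - 1 := hn ▸ Nat.mul_div_cancel' (Nat.sub_one_dvd_pow_sub_one q m)
  have hdA : (q - 1) * d = q ^ m - 1 - ∑ p ∈ multiples a (q - 1), q ^ p := by
    rw [hd, Nat.sub_sub _ (q ^ (m - 1)), hm, Nat.add_sub_cancel, show q - 2 = q - 1 - 1 by omega,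
      ← geomSum_multiples ha (by omega)]
    exact Nat.mul_div_cancel' (Nat.dvd_sub (Nat.sub_one_dvd_pow_sub_one q _)
      (sub_one_dvd_geomSum_multiples (by omega) ha))
  have hdn : d < n := by
    have := sum_pos (f := fun p => q ^ p) (fun p _ => by positivity)
      (multiples_nonempty (t := q - 1) ha (by omega))
    have : 1 < q ^ m := Nat.one_lt_pow (by omega) (by omega)
    exact Nat.lt_of_mul_lt_mul_left (a := q - 1) (by omega)
  have hleader : ∀ s, IsCosetLeader q n s ↔ IsCosetLeader q (q ^ m - 1) ((q - 1) * s) :=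
    fun s => hTn ▸ (isCosetLeader_mul_iff (by omega)).symm
  have hdlead : IsCosetLeader q n d :=
    (hleader d).2 (hdA ▸ hm ▸ isCosetLeader_sub_geomSum_multiples (by omega) ha (by omega))
  refine ⟨hdlead, fun s hds hsn hs => ?_, ⟨by omega, ?_⟩, fun l ⟨hl, hdl⟩ => ?_⟩
  · have := le_sub_geomSum_multiples_of_isCosetLeader (by omega) ha hm (hTn ▸
      Nat.mul_lt_mul_of_pos_left hsn (by omega)) (dvd_mul_right _ _) ((hleader s).1 hs)
    rw [← hdA] at this
    exact absurd (Nat.le_of_mul_le_mul_left this (by omega)) (not_le.2 hds)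
  · simpa using ((Nat.modEq_iff_dvd' (Nat.one_le_pow _ _ (by omega))).2
      (Dvd.intro_left _ hTn)).symm.mul_left d
  · by_contra hlm
    refine sub_geomSum_multiples_mul_pow_mod_ne (q := q) (t := q - 1) (by omega) ha (by omega) hl
      (hm ▸ not_le.1 hlm) ?_
    rw [← hm, ← hdA, ← hTn, mul_assoc, Nat.mul_mod_mul_left, hdl, Nat.mod_eq_of_lt hdn]

/-- For q > 3 a prime power, m = a(q-1)+1 with a ≥ 1, n = (q^m-1)/(q-1):
the largest q-cyclotomic coset leader modulo n is
δ = (q^m - 1 - q^{m-1} - Σ_{ℓ=1}^{q-2} q^{aℓ})/(q-1), and its q-cyclotomic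
coset has size m. -/
theorem stmt_16 (q a m n d : ℕ) (hq : ∃ p k : ℕ, p.Prime ∧ 0 < k ∧ q = p ^ k)
    (hq3 : 3 < q) (ha : 1 ≤ a) (hm : m = a * (q - 1) + 1)
    (hn : n = (q ^ m - 1) / (q - 1))
    (hd : d = (q ^ m - 1 - q ^ (m - 1) - ∑ ℓ ∈ Finset.Icc 1 (q - 2), q ^ (a * ℓ)) / (q - 1)) :
    (∀ j : ℕ, d ≤ d * q ^ j % n) ∧
    (∀ s : ℕ, d < s → s < n → ¬ (∀ j : ℕ, s ≤ s * q ^ j % n)) ∧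
    IsLeast {l : ℕ | 0 < l ∧ d * q ^ l ≡ d [MOD n]} m :=
  stmt_16_general q a m n d hq3 ha hm hn hd
end
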